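/- Let K₁, …, Kₙ be Markov kernels on X such that there exist ε ∈ (0,1] and probability measures ν₁, …, νₙ on X with Kᵢ(x, A) ≥ ε νᵢ(A) for every i, every x ∈ X and every measurable A. Then for any two probability measures λ₁, λ₂ on X, ‖λ₁K₁⋯Kₙ − λ₂K₁⋯Kₙ‖_TV ≤ (1 − ε)ⁿ. (This is the abstract form of Corollary 1: an inhomogeneous Markov chain whose transition kernels admit a common minorization constant ε forgets its initial distribution geometrically at rate 1 − ε.) -/

import Mathlib

/-!
Doeblin's argument. Split each kernel as `Kᵢ = ε νᵢ + (Kᵢ - ε νᵢ)`: the first part does not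
depend on the starting point and the second has mass `1 - ε`, so one step of the chain multiplies
a one-sided bound `μ A ≤ ν A + δ` (for all measurable `A`) by `1 - ε`. After `n` steps, starting
from `δ = 1`, both one-sided bounds are `(1 - ε)ⁿ`.
-/

open MeasureTheory ProbabilityTheory

/-- Total variation distance between two measures:
`‖μ − ν‖_TV = sup_{A measurable} |μ(A) − ν(A)|`. -/
noncomputable def tvDist {X : Type*} [MeasurableSpace X] (μ ν : Measure X) : ℝ :=
  ⨆ A : {A : Set X // MeasurableSet A}, |(μ A.1).toReal - (ν A.1).toReal|

/-- The law of the chain after `n` steps, started from `lam`, with transition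
kernel `K i` used at step `i+1` (i.e. the kernels used are `K 0, …, K (n-1)`,
playing the role of `K₁, …, Kₙ`). -/
noncomputable def chainMeasure {X : Type*} [MeasurableSpace X]
    (K : ℕ → Kernel X X) (lam : Measure X) : ℕ → Measure X
  | 0 => lam
  | n + 1 => (chainMeasure K lam n).bind (fun x => K n x)

open ENNReal

section

variable {X : Type*} [MeasurableSpace X]

/-- Hahn decomposition: on the positive set of `μ - ν` the integral of `g` gains at most
`c (μ s - ν s) ≤ c δ`, on its complement it can only lose. -/
theorem lintegral_le_lintegral_add_mul_of_forall_le_add {μ ν : Measure X}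
    [IsFiniteMeasure μ] [IsFiniteMeasure ν] {δ : ℝ≥0∞}
    (hδ : ∀ s, MeasurableSet s → μ s ≤ ν s + δ) {g : X → ℝ≥0∞} {c : ℝ≥0∞}
    (hgc : ∀ x, g x ≤ c) :
    ∫⁻ x, g x ∂μ ≤ ∫⁻ x, g x ∂ν + c * δ := by
  obtain ⟨s, hs, hνμ, hμν⟩ := hahn_decomposition μ ν
  have h_pos : ν.restrict s ≤ μ.restrict s := Measure.le_iff.2 fun t ht => by
    simpa only [Measure.restrict_apply ht] using hνμ _ (ht.inter hs) Set.inter_subset_right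
  have h_neg : μ.restrict sᶜ ≤ ν.restrict sᶜ := Measure.le_iff.2 fun t ht => by
    simpa only [Measure.restrict_apply ht] using hμν _ (ht.inter hs.compl) Set.inter_subset_right
  set τ := μ.restrict s - ν.restrict s
  have hτ_univ : τ Set.univ ≤ δ := by
    rw [Measure.sub_apply MeasurableSet.univ h_pos, Measure.restrict_apply_univ,
      Measure.restrict_apply_univ]
    exact tsub_le_iff_left.2 (hδ s hs)
  calc ∫⁻ x, g x ∂μ = ∫⁻ x, g x ∂(τ + ν.restrict s) + ∫⁻ x in sᶜ, g x ∂μ := by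
        rw [Measure.sub_add_cancel_of_le h_pos, lintegral_add_compl _ hs]
    _ = ∫⁻ x, g x ∂τ + (∫⁻ x in s, g x ∂ν + ∫⁻ x in sᶜ, g x ∂μ) := by
        rw [lintegral_add_measure, add_assoc]
    _ ≤ c * δ + (∫⁻ x in s, g x ∂ν + ∫⁻ x in sᶜ, g x ∂ν) := by
        gcongr
        calc ∫⁻ x, g x ∂τ ≤ ∫⁻ _, c ∂τ := lintegral_mono hgc
          _ = c * τ Set.univ := lintegral_const c
          _ ≤ c * δ := by gcongr
    _ = ∫⁻ x, g x ∂ν + c * δ := by rw [lintegral_add_compl _ hs, add_comm]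

section Minorization

variable {κ : Kernel X X} {e : ℝ≥0∞} {ρ : Measure X}

theorem ProbabilityTheory.Kernel.apply_sub_le_one_sub_of_minorized [IsMarkovKernel κ]
    [IsProbabilityMeasure ρ] (he : e ≠ ∞)
    (hmin : ∀ x A, MeasurableSet A → e * ρ A ≤ κ x A) {A : Set X} (hA : MeasurableSet A)
    (x : X) : κ x A - e * ρ A ≤ 1 - e := by
  refine ENNReal.le_sub_of_add_le_right he ?_
  calc κ x A - e * ρ A + e = κ x A - e * ρ A + e * ρ A + e * ρ Aᶜ := by
        rw [add_assoc, ← mul_add, measure_add_measure_compl hA, measure_univ, mul_one]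
    _ ≤ κ x A + κ x Aᶜ := by
        rw [tsub_add_cancel_of_le (hmin x A hA)]
        gcongr
        exact hmin x Aᶜ hA.compl
    _ = 1 := by rw [measure_add_measure_compl hA, measure_univ]

theorem MeasureTheory.Measure.bind_apply_eq_lintegral_sub_add {μ : Measure X}
    [IsProbabilityMeasure μ]
    (hmin : ∀ x A, MeasurableSet A → e * ρ A ≤ κ x A) {A : Set X} (hA : MeasurableSet A) :
    μ.bind κ A = ∫⁻ x, (κ x A - e * ρ A) ∂μ + e * ρ A := by
  calc μ.bind κ A = ∫⁻ x, (κ x A - e * ρ A + e * ρ A) ∂μ := by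
        rw [Measure.bind_apply hA κ.measurable.aemeasurable]
        exact lintegral_congr fun x => (tsub_add_cancel_of_le (hmin x A hA)).symm
    _ = ∫⁻ x, (κ x A - e * ρ A) ∂μ + e * ρ A := by
        rw [lintegral_add_right _ measurable_const, lintegral_const, measure_univ, mul_one]

theorem MeasureTheory.Measure.bind_apply_le_add_of_minorized [IsMarkovKernel κ]
    [IsProbabilityMeasure ρ] (he : e ≠ ∞)
    (hmin : ∀ x A, MeasurableSet A → e * ρ A ≤ κ x A) {μ ν : Measure X}
    [IsProbabilityMeasure μ] [IsProbabilityMeasure ν] {δ : ℝ≥0∞}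
    (hδ : ∀ s, MeasurableSet s → μ s ≤ ν s + δ) {A : Set X} (hA : MeasurableSet A) :
    μ.bind κ A ≤ ν.bind κ A + (1 - e) * δ := by
  rw [bind_apply_eq_lintegral_sub_add hmin hA, bind_apply_eq_lintegral_sub_add hmin hA,
    add_right_comm]
  gcongr
  exact lintegral_le_lintegral_add_mul_of_forall_le_add hδ
    (κ.apply_sub_le_one_sub_of_minorized he hmin hA)

end Minorization

instance isProbabilityMeasure_chainMeasure (K : ℕ → Kernel X X) [∀ i, IsMarkovKernel (K i)]
    (lam : Measure X) [IsProbabilityMeasure lam] (n : ℕ) :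
    IsProbabilityMeasure (chainMeasure K lam n) := by
  induction n with
  | zero => assumption
  | succ n ih =>
    constructor
    rw [chainMeasure, Measure.bind_apply .univ (K n).measurable.aemeasurable]
    simp

theorem chainMeasure_apply_le_add_pow {K : ℕ → Kernel X X} [∀ i, IsMarkovKernel (K i)]
    {e : ℝ≥0∞} (he : e ≠ ∞) {ρ : ℕ → Measure X} [∀ i, IsProbabilityMeasure (ρ i)] {n : ℕ}
    (hmin : ∀ i < n, ∀ x A, MeasurableSet A → e * ρ i A ≤ K i x A)
    (lam₁ lam₂ : Measure X) [IsProbabilityMeasure lam₁] [IsProbabilityMeasure lam₂]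
    {A : Set X} (hA : MeasurableSet A) :
    chainMeasure K lam₁ n A ≤ chainMeasure K lam₂ n A + (1 - e) ^ n := by
  induction n generalizing A with
  | zero => simpa using prob_le_one.trans le_add_self
  | succ n ih =>
    rw [pow_succ']
    exact Measure.bind_apply_le_add_of_minorized he (hmin n n.lt_succ_self)
      (fun s hs => ih (fun i hi => hmin i (hi.trans n.lt_succ_self)) hs) hA

theorem tvDist_le_of_forall_le_add {μ ν : Measure X} [IsFiniteMeasure μ] [IsFiniteMeasure ν]
    {r : ℝ} (hr : 0 ≤ r) (h₁ : ∀ A, MeasurableSet A → μ A ≤ ν A + ENNReal.ofReal r)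
    (h₂ : ∀ A, MeasurableSet A → ν A ≤ μ A + ENNReal.ofReal r) :
    tvDist μ ν ≤ r := by
  have sub_le {a b : ℝ≥0∞} (hb : b ≠ ∞) (hab : a ≤ b + ENNReal.ofReal r) :
      a.toReal - b.toReal ≤ r := by
    have := ENNReal.toReal_mono (add_ne_top.2 ⟨hb, ofReal_ne_top⟩) hab
    rw [toReal_add hb ofReal_ne_top, toReal_ofReal hr] at this
    linarith
  have : Nonempty {A : Set X // MeasurableSet A} := ⟨⟨∅, .empty⟩⟩
  exact ciSup_le fun ⟨A, hA⟩ => abs_sub_le_iff.2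
    ⟨sub_le (measure_ne_top _ _) (h₁ A hA), sub_le (measure_ne_top _ _) (h₂ A hA)⟩

end

theorem tv_forgetting_of_minorized_chain
    {X : Type*} [MeasurableSpace X]
    (n : ℕ) (K : ℕ → Kernel X X) [∀ i, IsMarkovKernel (K i)]
    (ε : ℝ) (hε0 : 0 < ε) (hε1 : ε ≤ 1)
    (ν : ℕ → Measure X) (hν : ∀ i, IsProbabilityMeasure (ν i))
    (hmin : ∀ i < n, ∀ x : X, ∀ A : Set X, MeasurableSet A →
      ENNReal.ofReal ε * ν i A ≤ K i x A)
    (lam₁ lam₂ : Measure X) [IsProbabilityMeasure lam₁] [IsProbabilityMeasure lam₂] :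
    tvDist (chainMeasure K lam₁ n) (chainMeasure K lam₂ n) ≤ (1 - ε) ^ n := by
  have hpow : (1 - ENNReal.ofReal ε) ^ n = ENNReal.ofReal ((1 - ε) ^ n) := by
    rw [ENNReal.ofReal_pow (by linarith), ENNReal.ofReal_sub _ hε0.le, ENNReal.ofReal_one]
  refine tvDist_le_of_forall_le_add (pow_nonneg (by linarith) n) (fun A hA => ?_)
    (fun A hA => ?_) <;>
  · rw [← hpow]
    exact chainMeasure_apply_le_add_pow ofReal_ne_top hmin _ _ hA
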